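/- If T is a bounded accretive-dissipative operator on a complex Hilbert space (i.e., both its real part (T+T*)/2 and imaginary part (T−T*)/(2i) are positive), then (1/√2)‖T‖ ≤ ω(T). -/

import Mathlib

open scoped InnerProductSpace
open ContinuousLinearMap

variable {H : Type*} [NormedAddCommGroup H] [InnerProductSpace ℂ H] [CompleteSpace H]

/-- The numerical radius of a bounded operator. -/
noncomputable def numRadius (T : H →L[ℂ] H) : ℝ :=
  ⨆ x : {x : H // ‖x‖ = 1}, ‖⟪T x.1, x.1⟫_ℂ‖

/-- The absolute value |A| = (A*A)^(1/2). -/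
noncomputable def opAbs (A : H →L[ℂ] H) : H →L[ℂ] H := CFC.sqrt (adjoint A * A)

/-- Real part of the Cartesian decomposition. -/
noncomputable def reP (T : H →L[ℂ] H) : H →L[ℂ] H := (2:ℂ)⁻¹ • (T + adjoint T)

/-- Imaginary part of the Cartesian decomposition. -/
noncomputable def imP (T : H →L[ℂ] H) : H →L[ℂ] H := (2*Complex.I:ℂ)⁻¹ • (T - adjoint T)

/-!
Write `T = A + i B` with `A = reP T` and `B = imP T` positive. For a unit vector `x`,
`⟪T x, x⟫ = ⟪A x, x⟫ - i ⟪B x, x⟫` has real and imaginary parts of fixed sign, so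
`⟪A x, x⟫ + ⟪B x, x⟫ ≤ √2 |⟪T x, x⟫| ≤ √2 ω(T)`. For unit vectors `x, y`, Cauchy–Schwarz for the
positive forms of `A` and `B` followed by AM–GM gives
`|⟪T x, y⟫| ≤ (⟪(A + B) x, x⟫ + ⟪(A + B) y, y⟫) / 2 ≤ √2 ω(T)`, and the supremum of the left side
over such `x, y` is `‖T‖`.
-/

theorem Complex.abs_re_add_abs_im_le (z : ℂ) : |z.re| + |z.im| ≤ √2 * ‖z‖ := by
  rw [← Real.sqrt_sq (norm_nonneg z), ← Real.sqrt_mul zero_le_two, Complex.sq_norm,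
    Complex.normSq_apply, ← Real.sqrt_sq (by positivity : 0 ≤ |z.re| + |z.im|)]
  gcongr
  nlinarith [sq_nonneg (|z.re| - |z.im|), sq_abs z.re, sq_abs z.im]

theorem reP_add_I_smul_imP (T : H →L[ℂ] H) : reP T + Complex.I • imP T = T := by
  have : Complex.I * (2 * Complex.I)⁻¹ = (2 : ℂ)⁻¹ := by field_simp
  rw [reP, imP, smul_smul, this]
  module

section

variable {E : Type*} [NormedAddCommGroup E] [InnerProductSpace ℂ E]

theorem numRadius_nonneg (T : E →L[ℂ] E) : 0 ≤ numRadius T :=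
  Real.iSup_nonneg fun _ ↦ norm_nonneg _

theorem norm_inner_le_numRadius (T : E →L[ℂ] E) {x : E} (hx : ‖x‖ = 1) :
    ‖⟪T x, x⟫_ℂ‖ ≤ numRadius T := by
  refine le_ciSup (f := fun x : {x : E // ‖x‖ = 1} ↦ ‖⟪T x.1, x.1⟫_ℂ‖) ⟨‖T‖, ?_⟩ ⟨x, hx⟩
  rintro _ ⟨⟨y, hy⟩, rfl⟩
  simpa [hy] using (norm_inner_le_norm (𝕜 := ℂ) (T y) y).trans (by simpa [hy] using T.le_opNorm y)

namespace ContinuousLinearMap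

theorem IsPositive.norm_inner_le_re_inner_self_add_div_two [CompleteSpace E] {P : E →L[ℂ] E}
    (hP : P.IsPositive) (x y : E) :
    ‖⟪P x, y⟫_ℂ‖ ≤ ((⟪P x, x⟫_ℂ).re + (⟪P y, y⟫_ℂ).re) / 2 := by
  obtain ⟨S, rfl⟩ :=
    CStarAlgebra.nonneg_iff_eq_star_mul_self.mp ((nonneg_iff_isPositive P).mpr hP)
  simp only [star_eq_adjoint, mul_apply_eq_comp, adjoint_inner_left, inner_self_eq_norm_sq_to_K]
  calc ‖⟪S x, S y⟫_ℂ‖ ≤ ‖S x‖ * ‖S y‖ := norm_inner_le_norm _ _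
    _ ≤ (‖S x‖ ^ 2 + ‖S y‖ ^ 2) / 2 := by linarith [two_mul_le_add_sq ‖S x‖ ‖S y‖]
    _ = _ := by norm_cast

theorem norm_add_I_smul_le_of_re_inner_self_le [CompleteSpace E] {A B : E →L[ℂ] E}
    (hA : A.IsPositive) (hB : B.IsPositive) {c : ℝ} (hc₀ : 0 ≤ c)
    (hc : ∀ x : E, ‖x‖ = 1 → (⟪A x, x⟫_ℂ).re + (⟪B x, x⟫_ℂ).re ≤ c) :
    ‖A + Complex.I • B‖ ≤ c := by
  refine opNorm_le_of_re_inner_le hc₀ fun x y hx hy ↦ ?_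
  calc RCLike.re ⟪(A + Complex.I • B) x, y⟫_ℂ ≤ ‖⟪A x, y⟫_ℂ‖ + ‖⟪B x, y⟫_ℂ‖ := by
        refine (RCLike.re_le_norm _).trans ?_
        simpa [inner_add_left, inner_smul_left] using
          norm_add_le ⟪A x, y⟫_ℂ (-(⟪B x, y⟫_ℂ * Complex.I))
    _ ≤ ((⟪A x, x⟫_ℂ).re + (⟪A y, y⟫_ℂ).re) / 2 + ((⟪B x, x⟫_ℂ).re + (⟪B y, y⟫_ℂ).re) / 2 :=
        add_le_add (hA.norm_inner_le_re_inner_self_add_div_two x y)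
          (hB.norm_inner_le_re_inner_self_add_div_two x y)
    _ ≤ c := by linarith [hc x hx, hc y hy]

theorem re_inner_self_add_le_sqrt_two_mul_norm_inner {A B : E →L[ℂ] E}
    (hA : (A : E →ₗ[ℂ] E).IsSymmetric) (hB : (B : E →ₗ[ℂ] E).IsSymmetric) (x : E) :
    (⟪A x, x⟫_ℂ).re + (⟪B x, x⟫_ℂ).re ≤ √2 * ‖⟪(A + Complex.I • B) x, x⟫_ℂ‖ := by
  have hAx : (⟪A x, x⟫_ℂ).im = 0 := hA.im_inner_apply_self x
  have hBx : (⟪B x, x⟫_ℂ).im = 0 := hB.im_inner_apply_self x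
  have hre : (⟪(A + Complex.I • B) x, x⟫_ℂ).re = (⟪A x, x⟫_ℂ).re := by simp [hBx]
  have him : (⟪(A + Complex.I • B) x, x⟫_ℂ).im = -(⟪B x, x⟫_ℂ).re := by simp [hAx]
  have h := Complex.abs_re_add_abs_im_le ⟪(A + Complex.I • B) x, x⟫_ℂ
  rw [hre, him, abs_neg] at h
  linarith [le_abs_self (⟪A x, x⟫_ℂ).re, le_abs_self (⟪B x, x⟫_ℂ).re]

end ContinuousLinearMap

end

theorem stmt_10 (T : H →L[ℂ] H) (h1 : (reP T).IsPositive) (h2 : (imP T).IsPositive) :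
    (1 / Real.sqrt 2) * ‖T‖ ≤ numRadius T := by
  have hT := reP_add_I_smul_imP T
  have hquad : ∀ x : H, ‖x‖ = 1 →
      (⟪reP T x, x⟫_ℂ).re + (⟪imP T x, x⟫_ℂ).re ≤ √2 * numRadius T := fun x hx ↦
    (re_inner_self_add_le_sqrt_two_mul_norm_inner h1.isSymmetric h2.isSymmetric x).trans <| by
      rw [hT]
      gcongr
      exact norm_inner_le_numRadius T hx
  have hnorm : ‖T‖ ≤ √2 * numRadius T := by
    have := norm_add_I_smul_le_of_re_inner_self_le h1 h2
      (mul_nonneg (Real.sqrt_nonneg 2) (numRadius_nonneg T)) hquad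
    rwa [hT] at this
  rw [one_div_mul_eq_div, div_le_iff₀ (by positivity), mul_comm]
  exact hnorm
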